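/- Let Γ be a finite connected graph with adjacency matrix A and positive Perron eigenvector α with ‖α‖² = n. Fix a vertex u and a nonnegative integer j, and let N_j(u) be the set of vertices at distance at most j from u, with ρ_{N_j(u)} the vector equal to α on N_j(u) and 0 elsewhere. Then for any real polynomial r of degree at most j with r(A)e_u ≠ 0, r(λ_0)/‖r(A)e_u‖ ≤ (1/α_u)·‖ρ_{N_j(u)}‖. -/

import Mathlib

/-!
Since `(A^k)_{vu}` counts walks of length `k`, the vector `r(A) e_u` vanishes outside the ball of
radius `j` around `u`. As `A` is symmetric and `A α = λ₀ α`, `⟨r(A) e_u, α⟩ = r(λ₀) α_u`, and by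
the support property `α` may be replaced by its restriction `ρ` to the ball; Cauchy–Schwarz gives
`r(λ₀) α_u ≤ ‖r(A) e_u‖ ‖ρ‖`.
-/

open Matrix Finset Polynomial

namespace Matrix

variable {n R : Type*} [Fintype n] [DecidableEq n] [CommRing R]

theorem aeval_mulVec_of_mulVec_eq_smul {A : Matrix n n R} {μ : R} {x : n → R}
    (hx : A *ᵥ x = μ • x) (p : R[X]) : aeval A p *ᵥ x = p.eval μ • x := by
  have h := Module.End.aeval_apply_of_mem_apply_eq_smul (p := p)
    (show toLinAlgEquiv' A x = μ • x from hx)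
  rwa [aeval_algEquiv, AlgHom.comp_apply] at h

theorem IsSymm.aeval {A : Matrix n n R} (hA : A.IsSymm) (p : R[X]) :
    (Polynomial.aeval A p).IsSymm := by
  induction p using Polynomial.induction_on' with
  | add p q hp hq => simpa only [map_add] using hp.add hq
  | monomial k a => simpa only [aeval_monomial, ← Algebra.smul_def] using (hA.pow k).smul a

theorem IsSymm.aeval_mulVec_single_dotProduct {A : Matrix n n R} (hA : A.IsSymm) {μ : R}
    {x : n → R} (hx : A *ᵥ x = μ • x) (p : R[X]) (u : n) :
    (Polynomial.aeval A p *ᵥ Pi.single u 1) ⬝ᵥ x = p.eval μ * x u := by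
  rw [dotProduct_comm, dotProduct_mulVec, ← (hA.aeval p).eq, vecMul_transpose,
    aeval_mulVec_of_mulVec_eq_smul hx, dotProduct_single, Pi.smul_apply, smul_eq_mul, mul_one]

end Matrix

namespace SimpleGraph

variable {V R : Type*} [Fintype V] [DecidableEq V] (G : SimpleGraph V) [DecidableRel G.Adj]

theorem adjMatrix_pow_apply_eq_zero_of_lt_dist [Semiring R] {k : ℕ} {v w : V}
    (h : k < G.dist v w) : (G.adjMatrix R ^ k) v w = 0 := by
  have hnone : IsEmpty {p : G.Walk v w | p.length = k} :=
    ⟨fun ⟨p, hp⟩ => (G.dist_le p).not_gt (hp ▸ h)⟩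
  rw [adjMatrix_pow_apply_eq_card_walk, Fintype.card_eq_zero, Nat.cast_zero]

theorem aeval_adjMatrix_apply_eq_zero_of_natDegree_lt_dist [CommSemiring R] {p : R[X]}
    {v w : V} (h : p.natDegree < G.dist v w) : aeval (G.adjMatrix R) p v w = 0 := by
  rw [aeval_eq_sum_range, Matrix.sum_apply]
  refine Finset.sum_eq_zero fun k hk => ?_
  rw [Matrix.smul_apply, G.adjMatrix_pow_apply_eq_zero_of_lt_dist (by grind), smul_zero]

end SimpleGraph

theorem local_spectral_bound_general
    (n : ℕ) (G : SimpleGraph (Fin n)) [DecidableRel G.Adj]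
    (lam0 : ℝ) (alpha : Fin n → ℝ) (hpos : ∀ u, 0 < alpha u)
    (heig : (G.adjMatrix ℝ).mulVec alpha = lam0 • alpha)
    (u : Fin n) (j : ℕ) (r : Polynomial ℝ) (hdeg : r.natDegree ≤ j) :
    r.eval lam0 /
        Real.sqrt (∑ v, ((Polynomial.aeval (G.adjMatrix ℝ) r).mulVec (Pi.single u 1) v) ^ 2)
      ≤ (1 / alpha u) *
        Real.sqrt (∑ v, (if G.dist u v ≤ j then alpha v else 0) ^ 2) := by
  set w := aeval (G.adjMatrix ℝ) r *ᵥ Pi.single u 1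
  set ρ : Fin n → ℝ := fun v => if G.dist u v ≤ j then alpha v else 0
  have hsupp : ∀ v, j < G.dist u v → w v = 0 := fun v hv => by
    simp only [w, mulVec_single_one, col_apply]
    exact G.aeval_adjMatrix_apply_eq_zero_of_natDegree_lt_dist (by rw [G.dist_comm]; omega)
  have hloc : w ⬝ᵥ alpha = ∑ v, w v * ρ v := Finset.sum_congr rfl fun v _ => by
    by_cases hv : G.dist u v ≤ j
    · simp only [ρ, if_pos hv]
    · simp only [ρ, if_neg hv, hsupp v (not_le.mp hv), zero_mul, mul_zero]
  have hbound : r.eval lam0 * alpha u ≤ √(∑ v, w v ^ 2) * √(∑ v, ρ v ^ 2) := by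
    rw [← IsSymm.aeval_mulVec_single_dotProduct G.isSymm_adjMatrix heig r u, hloc]
    exact Real.sum_mul_le_sqrt_mul_sqrt _ _ _
  have hu := hpos u
  -- if `r(A) e_u = 0` the left side is `r(λ₀) / 0 = 0`
  refine div_le_of_le_mul₀ (Real.sqrt_nonneg _) (by positivity) ?_
  calc r.eval lam0 = r.eval lam0 * alpha u / alpha u := by field_simp
    _ ≤ √(∑ v, w v ^ 2) * √(∑ v, ρ v ^ 2) / alpha u := by gcongr
    _ = _ := by ring

theorem local_spectral_bound
    (n : ℕ) (G : SimpleGraph (Fin n)) [DecidableRel G.Adj]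
    (hconn : G.Connected)
    (lam0 : ℝ) (alpha : Fin n → ℝ) (hpos : ∀ u, 0 < alpha u)
    (heig : (G.adjMatrix ℝ).mulVec alpha = lam0 • alpha)
    (hnorm : ∑ v, alpha v ^ 2 = (n : ℝ))
    (u : Fin n) (j : ℕ) (r : Polynomial ℝ) (hdeg : r.natDegree ≤ j)
    (hne : (Polynomial.aeval (G.adjMatrix ℝ) r).mulVec (Pi.single u 1) ≠ 0) :
    r.eval lam0 /
        Real.sqrt (∑ v, ((Polynomial.aeval (G.adjMatrix ℝ) r).mulVec (Pi.single u 1) v) ^ 2)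
      ≤ (1 / alpha u) *
        Real.sqrt (∑ v, (if G.dist u v ≤ j then alpha v else 0) ^ 2) :=
  local_spectral_bound_general n G lam0 alpha hpos heig u j r hdeg
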